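/- Let G₁ and G₂ be Γ-labeled graphs with |V(G₁) ∩ V(G₂)| ≥ 2, and suppose both are periodically rigid: r₂(E_i) = 2|V_i| − 2 for i = 1, 2. Then G₁ ∪ G₂ is periodically rigid: r₂(E₁ ∪ E₂) = 2|V₁ ∪ V₂| − 2. -/
import Mathlib
set_option linter.unusedSectionVars false
set_option maxHeartbeats 1000000


open Finset

/-- The set of vertices incident to an edge set `F`. -/
def labVerts {V ε : Type*} [DecidableEq V] [DecidableEq ε]
    (head tail : ε → V) (F : Finset ε) : Finset V :=
  F.image head ∪ F.image tail

/-- An edge set `F` of a `Γ`-labeled graph is balanced if the label of every closed walk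
in `F` is the identity; equivalently, the labels on `F` come from a potential `θ`. -/
def IsBalanced {V ε Γ : Type*} [AddCommGroup Γ]
    (head tail : ε → V) (ψ : ε → Γ) (F : Finset ε) : Prop :=
  ∃ θ : V → Γ, ∀ e ∈ F, ψ e = θ (head e) - θ (tail e)

/-- Independence in the periodic count matroid `R₂(V,Γ)`:
every nonempty subset `F'` satisfies `|F'| ≤ 2|V(F')| − 2`, and every nonempty balanced
subset `F'` satisfies `|F'| ≤ 2|V(F')| − 3`. -/
def CountIndep {V ε Γ : Type*} [DecidableEq V] [DecidableEq ε] [AddCommGroup Γ]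
    (head tail : ε → V) (ψ : ε → Γ) (F : Finset ε) : Prop :=
  (∀ F' ⊆ F, F'.Nonempty → F'.card ≤ 2 * (labVerts head tail F').card - 2) ∧
  (∀ F' ⊆ F, F'.Nonempty → IsBalanced head tail ψ F' →
    F'.card ≤ 2 * (labVerts head tail F').card - 3)

/-- The rank function `r₂` of the periodic count matroid: the maximum cardinality of an
independent subset of `E`. -/
noncomputable def rank2 {V ε Γ : Type*} [DecidableEq V] [DecidableEq ε] [AddCommGroup Γ]
    (head tail : ε → V) (ψ : ε → Γ) (E : Finset ε) : ℕ := by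
  classical
  exact (E.powerset.filter (CountIndep head tail ψ)).sup Finset.card

section Aux
variable {V ε Γ : Type*} [DecidableEq V] [DecidableEq ε] [AddCommGroup Γ]
variable {head tail : ε → V} {ψ : ε → Γ}

lemma mem_labVerts {F : Finset ε} {x : V} :
    x ∈ labVerts head tail F ↔ ∃ e ∈ F, head e = x ∨ tail e = x := by
  simp only [labVerts, mem_union, mem_image]
  constructor
  · rintro (⟨e, he, rfl⟩ | ⟨e, he, rfl⟩) <;> exact ⟨e, he, by tauto⟩
  · rintro ⟨e, he, rfl | rfl⟩
    · exact Or.inl ⟨e, he, rfl⟩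
    · exact Or.inr ⟨e, he, rfl⟩

lemma head_mem_labVerts {F : Finset ε} {e : ε} (h : e ∈ F) :
    head e ∈ labVerts head tail F := mem_labVerts.2 ⟨e, h, Or.inl rfl⟩

lemma tail_mem_labVerts {F : Finset ε} {e : ε} (h : e ∈ F) :
    tail e ∈ labVerts head tail F := mem_labVerts.2 ⟨e, h, Or.inr rfl⟩

lemma labVerts_mono {F G : Finset ε} (h : F ⊆ G) :
    labVerts head tail F ⊆ labVerts (V := V) head tail G := by
  intro x hx
  rw [mem_labVerts] at hx ⊢
  obtain ⟨e, he, hx⟩ := hx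
  exact ⟨e, h he, hx⟩

lemma labVerts_union {F G : Finset ε} :
    labVerts head tail (F ∪ G) = labVerts head tail F ∪ labVerts (V := V) head tail G := by
  ext x; simp only [mem_labVerts, mem_union]; constructor
  · rintro ⟨e, he | he, hx⟩
    · exact Or.inl ⟨e, he, hx⟩
    · exact Or.inr ⟨e, he, hx⟩
  · rintro (⟨e, he, hx⟩ | ⟨e, he, hx⟩) <;> exact ⟨e, by tauto, hx⟩

lemma labVerts_nonempty {F : Finset ε} (h : F.Nonempty) :
    (labVerts (V := V) head tail F).Nonempty :=
  ⟨head h.choose, head_mem_labVerts h.choose_spec⟩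

lemma labVerts_subset {F : Finset ε} {s : Finset V}
    (h : ∀ e ∈ F, head e ∈ s ∧ tail e ∈ s) :
    labVerts head tail F ⊆ s := by
  intro x hx
  rw [mem_labVerts] at hx
  obtain ⟨e, he, rfl | rfl⟩ := hx
  · exact (h e he).1
  · exact (h e he).2

lemma labVerts_singleton {e : ε} :
    labVerts (V := V) head tail {e} = {head e, tail e} := by
  ext x; simp [mem_labVerts, or_comm, eq_comm]

lemma balanced_subset {F G : Finset ε} (h : F ⊆ G)
    (hb : IsBalanced head tail ψ G) : IsBalanced head tail ψ F := by
  obtain ⟨θ, hθ⟩ := hb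
  exact ⟨θ, fun e he => hθ e (h he)⟩

lemma balanced_singleton {e : ε} (h : head e ≠ tail e) :
    IsBalanced head tail ψ {e} := by
  refine ⟨fun x => if x = head e then ψ e else 0, ?_⟩
  intro f hf
  simp only [mem_singleton] at hf
  subst hf
  simp [h, Ne.symm h, if_neg]

lemma indep_subset {F G : Finset ε} (h : F ⊆ G)
    (hi : CountIndep head tail ψ G) : CountIndep head tail ψ F :=
  ⟨fun F' hF' => hi.1 F' (hF'.trans h), fun F' hF' => hi.2 F' (hF'.trans h)⟩

lemma indep_bound2 {F a : Finset ε} (hF : CountIndep head tail ψ F)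
    (ha : a ⊆ F) (hne : a.Nonempty) :
    a.card + 2 ≤ 2 * (labVerts (V := V) head tail a).card := by
  have h1 := hF.1 a ha hne
  have h2 : 1 ≤ (labVerts (V := V) head tail a).card :=
    Finset.card_pos.2 (labVerts_nonempty hne)
  have h3 : 1 ≤ a.card := Finset.card_pos.2 hne
  omega

lemma indep_bound3 {F a : Finset ε} (hF : CountIndep head tail ψ F)
    (ha : a ⊆ F) (hne : a.Nonempty) (hb : IsBalanced head tail ψ a) :
    a.card + 3 ≤ 2 * (labVerts (V := V) head tail a).card := by
  have h1 := hF.2 a ha hne hb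
  have h3 : 1 ≤ a.card := Finset.card_pos.2 hne
  omega

lemma nonloop_of_mem_indep {F : Finset ε} (hF : CountIndep head tail ψ F)
    {e : ε} (he : e ∈ F) : head e ≠ tail e := by
  intro h
  have := indep_bound2 (V := V) hF (Finset.singleton_subset_iff.2 he) ⟨e, mem_singleton_self e⟩
  rw [labVerts_singleton] at this
  simp [h] at this

lemma card_labVerts_singleton {e : ε} (h : head e ≠ tail e) :
    (labVerts (V := V) head tail {e}).card = 2 := by
  rw [labVerts_singleton, card_insert_of_notMem (by simp [h]), card_singleton]

/-- A tight edge set. -/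
def Tight (head tail : ε → V) (F : Finset ε) : Prop :=
  F.Nonempty ∧ F.card + 2 = 2 * (labVerts head tail F).card

/-- A balanced-tight edge set. -/
def BTight (head tail : ε → V) (ψ : ε → Γ) (F : Finset ε) : Prop :=
  F.Nonempty ∧ IsBalanced head tail ψ F ∧ F.card + 3 = 2 * (labVerts head tail F).card

def Piece (head tail : ε → V) (ψ : ε → Γ) (F : Finset ε) : Prop :=
  Tight head tail F ∨ BTight head tail ψ F

lemma btight_singleton {F : Finset ε} (hF : CountIndep head tail ψ F)
    {e : ε} (he : e ∈ F) : BTight head tail ψ {e} := by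
  have hl := nonloop_of_mem_indep hF he
  exact ⟨⟨e, mem_singleton_self e⟩, balanced_singleton hl,
    by rw [card_labVerts_singleton hl]; rfl⟩

end Aux

section Aux2
variable {V ε Γ : Type*} [DecidableEq V] [DecidableEq ε] [AddCommGroup Γ]
variable {head tail : ε → V} {ψ : ε → Γ}

lemma constancy {F c : Finset ε} (hF : CountIndep head tail ψ F) (hc : c ⊆ F)
    (hbt : BTight head tail ψ c) (d : V → Γ)
    (hd : ∀ e ∈ c, d (head e) = d (tail e)) :
    ∀ x ∈ labVerts head tail c, ∀ y ∈ labVerts head tail c, d x = d y := by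
  classical
  obtain ⟨hne, hbal, hcard⟩ := hbt
  set vc := labVerts head tail c with hvc
  set S := vc.image d with hS
  set cg : Γ → Finset ε := fun g => c.filter (fun e => d (head e) = g) with hcg
  have hmemS : ∀ x ∈ vc, d x ∈ S := fun x hx => Finset.mem_image_of_mem d hx
  have hcov : c ⊆ S.biUnion cg := by
    intro e he
    refine Finset.mem_biUnion.2 ⟨d (head e), hmemS _ (head_mem_labVerts he), ?_⟩
    simp [hcg, he]
  have hsum1 : c.card ≤ ∑ g ∈ S, (cg g).card :=
    (Finset.card_le_card hcov).trans Finset.card_biUnion_le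
  have hne_g : ∀ g ∈ S, (cg g).Nonempty := by
    intro g hg
    obtain ⟨x, hx, rfl⟩ := Finset.mem_image.1 hg
    rw [hvc, mem_labVerts] at hx
    obtain ⟨e, he, hx | hx⟩ := hx
    · exact ⟨e, Finset.mem_filter.2 ⟨he, by rw [hx]⟩⟩
    · exact ⟨e, Finset.mem_filter.2 ⟨he, by rw [hd e he, hx]⟩⟩
  have hbound : ∀ g ∈ S, (cg g).card + 3 ≤ 2 * (vc.filter (fun x => d x = g)).card := by
    intro g hg
    have hsub : cg g ⊆ c := Finset.filter_subset _ _
    have h1 := indep_bound3 hF (hsub.trans hc) (hne_g g hg) (balanced_subset hsub hbal)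
    have h2 : labVerts head tail (cg g) ⊆ vc.filter (fun x => d x = g) := by
      apply labVerts_subset
      intro e he
      obtain ⟨hec, hdg⟩ := Finset.mem_filter.1 he
      constructor
      · exact Finset.mem_filter.2 ⟨head_mem_labVerts hec, hdg⟩
      · exact Finset.mem_filter.2 ⟨tail_mem_labVerts hec,
          by rw [← hd e hec]; exact hdg⟩
    calc (cg g).card + 3 ≤ 2 * (labVerts head tail (cg g)).card := h1
      _ ≤ 2 * (vc.filter (fun x => d x = g)).card :=
          Nat.mul_le_mul_left 2 (Finset.card_le_card h2)
  have hfib : vc.card = ∑ g ∈ S, (vc.filter (fun x => d x = g)).card :=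
    Finset.card_eq_sum_card_fiberwise hmemS
  have hS1 : S.card ≤ 1 := by
    have h3 : ∑ g ∈ S, ((cg g).card + 3) ≤ ∑ g ∈ S, 2 * (vc.filter (fun x => d x = g)).card :=
      Finset.sum_le_sum hbound
    rw [Finset.sum_add_distrib, Finset.sum_const, ← Finset.mul_sum, ← hfib] at h3
    simp only [smul_eq_mul] at h3
    omega
  intro x hx y hy
  have := Finset.card_le_one.1 hS1 (d x) (hmemS x hx) (d y) (hmemS y hy)
  exact this

lemma compat {F a : Finset ε} {e : ε} (hF : CountIndep head tail ψ F)
    (ha : a ⊆ F) (hbt : BTight head tail ψ a)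
    {θ : V → Γ} (hθ : ∀ f ∈ a, ψ f = θ (head f) - θ (tail f))
    (hbal : IsBalanced head tail ψ (insert e a))
    (hhe : head e ∈ labVerts head tail a) (hte : tail e ∈ labVerts head tail a) :
    ψ e = θ (head e) - θ (tail e) := by
  obtain ⟨θ', hθ'⟩ := hbal
  have hd : ∀ f ∈ a, (θ (head f) - θ' (head f)) = (θ (tail f) - θ' (tail f)) := by
    intro f hf
    have h1 := hθ f hf
    have h2 := hθ' f (Finset.mem_insert_of_mem hf)
    have : θ (head f) - θ (tail f) = θ' (head f) - θ' (tail f) := by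
      rw [← h1, ← h2]
    exact sub_eq_sub_iff_sub_eq_sub.1 this
  have hcst := constancy hF ha hbt (fun x => θ x - θ' x) hd (head e) hhe (tail e) hte
  have he' := hθ' e (Finset.mem_insert_self e a)
  rw [he']
  exact (sub_eq_sub_iff_sub_eq_sub.1 hcst).symm

lemma labVerts_inter_subset {a b : Finset ε} :
    labVerts head tail (a ∩ b) ⊆ labVerts (V := V) head tail a ∩ labVerts head tail b :=
  Finset.subset_inter (labVerts_mono Finset.inter_subset_left)
    (labVerts_mono Finset.inter_subset_right)

lemma piece_nonempty {a : Finset ε} (h : Piece head tail ψ a) : a.Nonempty := by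
  rcases h with ⟨h, _⟩ | ⟨h, _, _⟩ <;> exact h

lemma piece_union {F a b : Finset ε} (hF : CountIndep head tail ψ F)
    (ha : a ⊆ F) (hb : b ⊆ F)
    (hpa : Piece head tail ψ a) (hpb : Piece head tail ψ b)
    (hsh : 2 ≤ (labVerts head tail a ∩ labVerts head tail b).card) :
    Piece head tail ψ (a ∪ b) := by
  classical
  have hane := piece_nonempty hpa
  have hvu : labVerts head tail (a ∪ b)
      = labVerts head tail a ∪ labVerts (V := V) head tail b := labVerts_union
  have hI : (a ∪ b).card + (a ∩ b).card = a.card + b.card :=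
    Finset.card_union_add_card_inter a b
  have hV : (labVerts head tail a ∪ labVerts (V := V) head tail b).card
        + (labVerts head tail a ∩ labVerts head tail b).card
      = (labVerts head tail a).card + (labVerts head tail b).card :=
    Finset.card_union_add_card_inter _ _
  have hU2 : (a ∪ b).card + 2
      ≤ 2 * (labVerts head tail a ∪ labVerts (V := V) head tail b).card := by
    have := indep_bound2 hF (Finset.union_subset ha hb) (hane.mono Finset.subset_union_left)
    rwa [hvu] at this
  have hk : (labVerts head tail (a ∩ b)).card
      ≤ (labVerts head tail a ∩ labVerts (V := V) head tail b).card :=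
    Finset.card_le_card labVerts_inter_subset
  have hunion_ne : (a ∪ b).Nonempty := hane.mono Finset.subset_union_left
  have hI2 : (a ∩ b).card = 0 ∨
      (a ∩ b).card + 2 ≤ 2 * (labVerts (V := V) head tail (a ∩ b)).card := by
    rcases Finset.eq_empty_or_nonempty (a ∩ b) with h | h
    · exact Or.inl (by rw [h]; rfl)
    · exact Or.inr (indep_bound2 hF (Finset.inter_subset_left.trans ha) h)
  rcases hpa with ⟨-, hca⟩ | ⟨-, hba, hca⟩ <;> rcases hpb with ⟨-, hcb⟩ | ⟨-, hbb, hcb⟩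
  · exact Or.inl ⟨hunion_ne, by rw [hvu]; omega⟩
  · have hI3 : (a ∩ b).card = 0 ∨
        (a ∩ b).card + 3 ≤ 2 * (labVerts (V := V) head tail (a ∩ b)).card := by
      rcases Finset.eq_empty_or_nonempty (a ∩ b) with h | h
      · exact Or.inl (by rw [h]; rfl)
      · exact Or.inr (indep_bound3 hF (Finset.inter_subset_left.trans ha) h
          (balanced_subset Finset.inter_subset_right hbb))
    exact Or.inl ⟨hunion_ne, by rw [hvu]; omega⟩
  · have hI3 : (a ∩ b).card = 0 ∨
        (a ∩ b).card + 3 ≤ 2 * (labVerts (V := V) head tail (a ∩ b)).card := by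
      rcases Finset.eq_empty_or_nonempty (a ∩ b) with h | h
      · exact Or.inl (by rw [h]; rfl)
      · exact Or.inr (indep_bound3 hF (Finset.inter_subset_left.trans ha) h
          (balanced_subset Finset.inter_subset_left hba))
    exact Or.inl ⟨hunion_ne, by rw [hvu]; omega⟩
  · -- btight btight
    have hI3 : (a ∩ b).card = 0 ∨
        (a ∩ b).card + 3 ≤ 2 * (labVerts (V := V) head tail (a ∩ b)).card := by
      rcases Finset.eq_empty_or_nonempty (a ∩ b) with h | h
      · exact Or.inl (by rw [h]; rfl)
      · exact Or.inr (indep_bound3 hF (Finset.inter_subset_left.trans ha) h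
          (balanced_subset Finset.inter_subset_left hba))
    by_cases htU : (a ∪ b).card + 2
        = 2 * (labVerts head tail a ∪ labVerts (V := V) head tail b).card
    · exact Or.inl ⟨hunion_ne, by rw [hvu]; exact htU⟩
    · have hcne : (a ∩ b).Nonempty := by
        rcases Finset.eq_empty_or_nonempty (a ∩ b) with h | h
        · exfalso
          have h0 : (a ∩ b).card = 0 := by rw [h]; rfl
          omega
        · exact h
      have hcpos : 1 ≤ (a ∩ b).card := Finset.card_pos.2 hcne
      have hIeq : (a ∩ b).card + 3 = 2 * (labVerts (V := V) head tail (a ∩ b)).card ∧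
          (labVerts head tail a ∩ labVerts (V := V) head tail b).card
            ≤ (labVerts head tail (a ∩ b)).card := by
        rcases hI3 with h | h
        · omega
        · constructor <;> omega
      have hveq : labVerts head tail (a ∩ b)
          = labVerts head tail a ∩ labVerts (V := V) head tail b :=
        Finset.eq_of_subset_of_card_le labVerts_inter_subset hIeq.2
      have hcbt : BTight head tail ψ (a ∩ b) :=
        ⟨hcne, balanced_subset Finset.inter_subset_left hba, hIeq.1⟩
      obtain ⟨θa, hθa⟩ := hba
      obtain ⟨θb, hθb⟩ := hbb
      obtain ⟨x₀, hx₀⟩ := labVerts_nonempty (head := head) (tail := tail) hcne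
      have hd : ∀ e ∈ a ∩ b, (θa (head e) - θb (head e)) = (θa (tail e) - θb (tail e)) := by
        intro e he
        have h1 := hθa e (Finset.mem_inter.1 he).1
        have h2 := hθb e (Finset.mem_inter.1 he).2
        exact sub_eq_sub_iff_sub_eq_sub.1 (h1 ▸ h2 ▸ rfl : θa (head e) - θa (tail e)
          = θb (head e) - θb (tail e))
      have hcst := constancy hF (Finset.inter_subset_left.trans ha) hcbt
        (fun x => θa x - θb x) hd
      have hkey : ∀ z ∈ labVerts (V := V) head tail b,
          (fun x => if x ∈ labVerts (V := V) head tail a then θa x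
            else θb x + (θa x₀ - θb x₀)) z = θb z + (θa x₀ - θb x₀) := by
        intro z hz
        by_cases hzva : z ∈ labVerts (V := V) head tail a
        · have hzc : z ∈ labVerts head tail (a ∩ b) := by
            rw [hveq]; exact Finset.mem_inter.2 ⟨hzva, hz⟩
          have h5 := hcst z hzc x₀ hx₀
          simp only [if_pos hzva]
          exact sub_eq_iff_eq_add'.1 h5
        · simp only [if_neg hzva]
      have hbalU : IsBalanced head tail ψ (a ∪ b) := by
        refine ⟨fun x => if x ∈ labVerts (V := V) head tail a then θa x
            else θb x + (θa x₀ - θb x₀), ?_⟩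
        intro e he
        rcases Finset.mem_union.1 he with h | h
        · simp only [if_pos (head_mem_labVerts (tail := tail) h),
            if_pos (tail_mem_labVerts (head := head) h)]
          exact hθa e h
        · rw [hkey _ (head_mem_labVerts h), hkey _ (tail_mem_labVerts h),
            add_sub_add_right_eq_sub]
          exact hθb e h
      have hU3 := indep_bound3 hF (Finset.union_subset ha hb) hunion_ne hbalU
      rw [hvu] at hU3
      refine Or.inr ⟨hunion_ne, hbalU, ?_⟩
      rw [hvu]
      omega

lemma two_le_card_labVerts {F : Finset ε} {e : ε} (he : e ∈ F) (hl : head e ≠ tail e) :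
    2 ≤ (labVerts (V := V) head tail F).card := by
  have hsub : ({head e, tail e} : Finset V) ⊆ labVerts head tail F :=
    Finset.insert_subset (head_mem_labVerts he)
      (Finset.singleton_subset_iff.2 (tail_mem_labVerts he))
  have := Finset.card_le_card hsub
  rwa [Finset.card_pair hl] at this

lemma mem_violating {F F'' : Finset ε} {e : ε} (hF : CountIndep head tail ψ F)
    (hsub : F'' ⊆ insert e F)
    (hviol : ¬ (F''.card ≤ 2 * (labVerts (V := V) head tail F'').card - 2) ∨
      (IsBalanced head tail ψ F'' ∧
        ¬ (F''.card ≤ 2 * (labVerts (V := V) head tail F'').card - 3))) :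
    e ∈ F'' := by
  by_contra he
  have hsub' : F'' ⊆ F := fun x hx => by
    rcases Finset.mem_insert.1 (hsub hx) with h | h
    · exact absurd (h ▸ hx) he
    · exact h
  have hne : F''.Nonempty := by
    rcases Finset.eq_empty_or_nonempty F'' with h | h
    · subst h
      rcases hviol with h | ⟨_, h⟩ <;> simp at h
    · exact h
  rcases hviol with h | ⟨hb, h⟩
  · exact h (hF.1 F'' hsub' hne)
  · exact h (hF.2 F'' hsub' hne hb)

lemma cert_of_unbal {F F'' : Finset ε} {e : ε} (hF : CountIndep head tail ψ F)
    (hl : head e ≠ tail e) (hsub : F'' ⊆ insert e F)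
    (hviol : ¬ (F''.card ≤ 2 * (labVerts (V := V) head tail F'').card - 2)) :
    ∃ a, a ⊆ F ∧ head e ∈ labVerts head tail a ∧ tail e ∈ labVerts head tail a ∧
      Tight head tail a := by
  have heF : e ∈ F'' := mem_violating hF hsub (Or.inl hviol)
  have hc2 : 2 ≤ (labVerts (V := V) head tail F'').card := two_le_card_labVerts heF hl
  have hviol' : 2 * (labVerts (V := V) head tail F'').card - 2 < F''.card :=
    Nat.lt_of_not_le (fun h => hviol h)
  set a := F''.erase e with hadef
  have haF : a ⊆ F := by
    intro x hx
    have hx1 := Finset.mem_of_mem_erase hx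
    have hx2 := Finset.ne_of_mem_erase hx
    rcases Finset.mem_insert.1 (hsub hx1) with h | h
    · exact absurd h hx2
    · exact h
  have hacard : a.card + 1 = F''.card := by
    rw [hadef, Finset.card_erase_of_mem heF]
    have : 1 ≤ F''.card := Finset.card_pos.2 ⟨e, heF⟩
    omega
  have hane : a.Nonempty := by
    rw [← Finset.card_pos]
    omega
  have hva : labVerts head tail a ⊆ labVerts (V := V) head tail F'' :=
    labVerts_mono (Finset.erase_subset e F'')
  have hb2 := indep_bound2 hF haF hane
  have hvale := Finset.card_le_card hva
  have hveq : labVerts head tail a = labVerts (V := V) head tail F'' :=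
    Finset.eq_of_subset_of_card_le hva (by omega)
  refine ⟨a, haF, ?_, ?_, hane, ?_⟩
  · rw [hveq]; exact head_mem_labVerts heF
  · rw [hveq]; exact tail_mem_labVerts heF
  · rw [hveq]; omega

lemma cert_exists {F : Finset ε} {e : ε} (hF : CountIndep head tail ψ F)
    (hl : head e ≠ tail e)
    (hdep : ¬ CountIndep head tail ψ (insert e F)) :
    ∃ a, a ⊆ F ∧ head e ∈ labVerts head tail a ∧ tail e ∈ labVerts head tail a ∧
      (Tight head tail a ∨
        (BTight head tail ψ a ∧ IsBalanced head tail ψ (insert e a))) := by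
  rcases not_and_or.1 hdep with hA | hB
  · push_neg at hA
    obtain ⟨F'', hsub, hne, hviol⟩ := hA
    obtain ⟨a, h1, h2, h3, h4⟩ := cert_of_unbal hF hl hsub (Nat.not_le.2 hviol)
    exact ⟨a, h1, h2, h3, Or.inl h4⟩
  · push_neg at hB
    obtain ⟨F'', hsub, hne, hbal, hviol⟩ := hB
    by_cases hA' : F''.card ≤ 2 * (labVerts (V := V) head tail F'').card - 2
    · have heF : e ∈ F'' := mem_violating hF hsub (Or.inr ⟨hbal, Nat.not_le.2 hviol⟩)
      have hc2 : 2 ≤ (labVerts (V := V) head tail F'').card := two_le_card_labVerts heF hl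
      set a := F''.erase e with hadef
      have haF : a ⊆ F := by
        intro x hx
        have hx1 := Finset.mem_of_mem_erase hx
        have hx2 := Finset.ne_of_mem_erase hx
        rcases Finset.mem_insert.1 (hsub hx1) with h | h
        · exact absurd h hx2
        · exact h
      have hacard : a.card + 1 = F''.card := by
        rw [hadef, Finset.card_erase_of_mem heF]
        have : 1 ≤ F''.card := Finset.card_pos.2 ⟨e, heF⟩
        omega
      have hins : insert e a = F'' := Finset.insert_erase heF
      have hbala : IsBalanced head tail ψ a :=
        balanced_subset (Finset.erase_subset e F'') hbal
      have hane : a.Nonempty := by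
        rw [← Finset.card_pos]
        omega
      have hva : labVerts head tail a ⊆ labVerts (V := V) head tail F'' :=
        labVerts_mono (Finset.erase_subset e F'')
      have hb3 := indep_bound3 hF haF hane hbala
      have hvale := Finset.card_le_card hva
      have hveq : labVerts head tail a = labVerts (V := V) head tail F'' :=
        Finset.eq_of_subset_of_card_le hva (by omega)
      refine ⟨a, haF, ?_, ?_, Or.inr ⟨⟨hane, hbala, by rw [hveq]; omega⟩, by
        rw [hins]; exact hbal⟩⟩
      · rw [hveq]; exact head_mem_labVerts heF
      · rw [hveq]; exact tail_mem_labVerts heF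
    · obtain ⟨a, h1, h2, h3, h4⟩ := cert_of_unbal hF hl hsub hA'
      exact ⟨a, h1, h2, h3, Or.inl h4⟩

end Aux2

section Aux3
variable {V ε Γ : Type*} [DecidableEq V] [DecidableEq ε] [AddCommGroup Γ]
variable {head tail : ε → V} {ψ : ε → Γ}

lemma indep_empty : CountIndep head tail ψ (∅ : Finset ε) := by
  constructor <;>
  · intro F' h hne
    rw [Finset.subset_empty] at h
    subst h
    exact absurd rfl (Finset.nonempty_iff_ne_empty.1 hne)

lemma le_rank2 {E G : Finset ε} (hG : G ⊆ E) (hi : CountIndep head tail ψ G) :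
    G.card ≤ rank2 head tail ψ E := by
  classical
  unfold rank2
  refine Finset.le_sup ?_
  simp only [Finset.mem_filter, Finset.mem_powerset]
  exact ⟨hG, hi⟩

lemma rank2_le {E : Finset ε} {n : ℕ}
    (h : ∀ G ⊆ E, CountIndep head tail ψ G → G.card ≤ n) :
    rank2 head tail ψ E ≤ n := by
  classical
  unfold rank2
  refine Finset.sup_le ?_
  intro G hG
  simp only [Finset.mem_filter, Finset.mem_powerset] at hG
  exact h G hG.1 hG.2

lemma rank2_attained (E : Finset ε) :
    ∃ G, G ⊆ E ∧ CountIndep head tail ψ G ∧ G.card = rank2 head tail ψ E := by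
  classical
  have hne : (E.powerset.filter (CountIndep head tail ψ)).Nonempty :=
    ⟨∅, Finset.mem_filter.2 ⟨Finset.empty_mem_powerset E, indep_empty⟩⟩
  obtain ⟨G, hG, hEq⟩ := Finset.exists_mem_eq_sup _ hne Finset.card
  simp only [Finset.mem_filter, Finset.mem_powerset] at hG
  refine ⟨G, hG.1, hG.2, ?_⟩
  unfold rank2
  exact hEq.symm

lemma exists_max_piece {F a : Finset ε} (haF : a ⊆ F) (hpa : Piece head tail ψ a) :
    ∃ P, P ⊆ F ∧ Piece head tail ψ P ∧ a ⊆ P ∧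
      ∀ Q, Q ⊆ F → Piece head tail ψ Q → a ⊆ Q → Q.card ≤ P.card := by
  classical
  have hne : (F.powerset.filter (fun Q => Piece head tail ψ Q ∧ a ⊆ Q)).Nonempty :=
    ⟨a, Finset.mem_filter.2 ⟨Finset.mem_powerset.2 haF, hpa, Finset.Subset.refl a⟩⟩
  obtain ⟨P, hP, hmax⟩ := Finset.exists_max_image _ Finset.card hne
  simp only [Finset.mem_filter, Finset.mem_powerset] at hP
  refine ⟨P, hP.1, hP.2.1, hP.2.2, fun Q h1 h2 h3 => hmax Q ?_⟩
  exact Finset.mem_filter.2 ⟨Finset.mem_powerset.2 h1, h2, h3⟩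

end Aux3

section Main
variable {V ε Γ : Type*} [DecidableEq V] [DecidableEq ε] [AddCommGroup Γ]
variable {head tail : ε → V} {ψ : ε → Γ}

lemma exists_spanning_tight {F₁ F₂ : Finset ε}
    (h1 : CountIndep head tail ψ F₁) (h2 : CountIndep head tail ψ F₂)
    (ht1 : Tight head tail F₁) (ht2 : Tight head tail F₂)
    (hsh : 2 ≤ (labVerts head tail F₁ ∩ labVerts head tail F₂).card) :
    ∃ U, U ⊆ F₁ ∪ F₂ ∧ CountIndep head tail ψ U ∧ Tight head tail U ∧
      labVerts head tail F₁ ∪ labVerts (V := V) head tail F₂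
        ⊆ labVerts head tail U := by
  classical
  -- a maximal independent set F with F₁ ⊆ F ⊆ F₁ ∪ F₂
  have hSne : F₁ ∈ (F₁ ∪ F₂).powerset.filter
      (fun G => F₁ ⊆ G ∧ CountIndep head tail ψ G) :=
    Finset.mem_filter.2 ⟨Finset.mem_powerset.2 Finset.subset_union_left,
      Finset.Subset.refl F₁, h1⟩
  obtain ⟨F, hFS, hFmax⟩ := Finset.exists_max_image _ Finset.card ⟨F₁, hSne⟩
  simp only [Finset.mem_filter, Finset.mem_powerset] at hFS
  obtain ⟨hFsub, hF1F, hFind⟩ := hFS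
  -- certificates: every edge of F₂ is spanned by a piece of F
  have hcert : ∀ e ∈ F₂, ∃ a, a ⊆ F ∧ head e ∈ labVerts head tail a ∧
      tail e ∈ labVerts head tail a ∧
      (Tight head tail a ∨
        (BTight head tail ψ a ∧ IsBalanced head tail ψ (insert e a))) := by
    intro e he
    have hl : head e ≠ tail e := nonloop_of_mem_indep h2 he
    by_cases heF : e ∈ F
    · refine ⟨{e}, Finset.singleton_subset_iff.2 heF,
        head_mem_labVerts (Finset.mem_singleton_self e),
        tail_mem_labVerts (Finset.mem_singleton_self e),
        Or.inr ⟨btight_singleton hFind heF, ?_⟩⟩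
      rw [Finset.insert_eq_self.2 (Finset.mem_singleton_self e)]
      exact balanced_singleton hl
    · refine cert_exists hFind hl ?_
      intro hind
      have hmem : insert e F ∈ (F₁ ∪ F₂).powerset.filter
          (fun G => F₁ ⊆ G ∧ CountIndep head tail ψ G) :=
        Finset.mem_filter.2 ⟨Finset.mem_powerset.2
          (Finset.insert_subset (Finset.mem_union_right _ he) hFsub),
          hF1F.trans (Finset.subset_insert e F), hind⟩
      have hle := hFmax _ hmem
      rw [Finset.card_insert_of_notMem heF] at hle
      omega
  choose! cert hcF hch hct hcp using hcert
  have hcpiece : ∀ e ∈ F₂, Piece head tail ψ (cert e) := by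
    intro e he
    rcases hcp e he with h | h
    · exact Or.inl h
    · exact Or.inr h.1
  have hPm : ∀ e ∈ F₂, ∃ P, P ⊆ F ∧ Piece head tail ψ P ∧ cert e ⊆ P ∧
      ∀ Q, Q ⊆ F → Piece head tail ψ Q → cert e ⊆ Q → Q.card ≤ P.card :=
    fun e he => exists_max_piece (hcF e he) (hcpiece e he)
  choose! Pf hPsub hPpiece hPc hPmax using hPm
  -- absorption: a piece containing a maximal piece equals it
  have habs : ∀ e ∈ F₂, ∀ R, R ⊆ F → Piece head tail ψ R → Pf e ⊆ R → Pf e = R := by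
    intro e he R h1' h2' h3'
    exact Finset.eq_of_subset_of_card_le h3'
      (hPmax e he R h1' h2' ((hPc e he).trans h3'))
  -- distinct maximal pieces are edge-disjoint
  have hdisj : ∀ q₁ ∈ F₂.image Pf, ∀ q₂ ∈ F₂.image Pf, q₁ ≠ q₂ → Disjoint q₁ q₂ := by
    intro q₁ hq₁ q₂ hq₂ hne
    obtain ⟨e₁, he₁, rfl⟩ := Finset.mem_image.1 hq₁
    obtain ⟨e₂, he₂, rfl⟩ := Finset.mem_image.1 hq₂
    rw [Finset.disjoint_left]
    intro f hf₁ hf₂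
    have hl : head f ≠ tail f := nonloop_of_mem_indep hFind (hPsub e₁ he₁ hf₁)
    have hssub : ({head f, tail f} : Finset V) ⊆
        labVerts head tail (Pf e₁) ∩ labVerts head tail (Pf e₂) :=
      Finset.insert_subset
        (Finset.mem_inter.2 ⟨head_mem_labVerts hf₁, head_mem_labVerts hf₂⟩)
        (Finset.singleton_subset_iff.2
          (Finset.mem_inter.2 ⟨tail_mem_labVerts hf₁, tail_mem_labVerts hf₂⟩))
    have hsh2 : 2 ≤ (labVerts head tail (Pf e₁) ∩ labVerts head tail (Pf e₂)).card := by
      have := Finset.card_le_card hssub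
      rwa [Finset.card_pair hl] at this
    have hpu := piece_union hFind (hPsub e₁ he₁) (hPsub e₂ he₂)
      (hPpiece e₁ he₁) (hPpiece e₂ he₂) hsh2
    have hub := Finset.union_subset (hPsub e₁ he₁) (hPsub e₂ he₂)
    have hu1 := habs e₁ he₁ _ hub hpu Finset.subset_union_left
    have hu2 := habs e₂ he₂ _ hub hpu Finset.subset_union_right
    exact hne (hu1.trans hu2.symm)
  -- per-piece counting bound
  have hqb : ∀ q ∈ F₂.image Pf,
      (F₂.filter (fun e => Pf e = q)).card + 2 * (labVerts (V := V) head tail q).card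
        ≤ 2 * (labVerts head tail q ∩ labVerts head tail F₂).card + q.card := by
    intro q hq
    obtain ⟨e₀, he₀, rfl⟩ := Finset.mem_image.1 hq
    have hfibne : (F₂.filter (fun e => Pf e = Pf e₀)).Nonempty :=
      ⟨e₀, Finset.mem_filter.2 ⟨he₀, rfl⟩⟩
    have hfibsub : F₂.filter (fun e => Pf e = Pf e₀) ⊆ F₂ := Finset.filter_subset _ _
    have hvfib : labVerts head tail (F₂.filter (fun e => Pf e = Pf e₀)) ⊆
        labVerts head tail (Pf e₀) ∩ labVerts (V := V) head tail F₂ := by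
      apply labVerts_subset
      intro e hee
      obtain ⟨he2, hPe⟩ := Finset.mem_filter.1 hee
      exact ⟨Finset.mem_inter.2 ⟨hPe ▸ labVerts_mono (hPc e he2) (hch e he2),
          head_mem_labVerts he2⟩,
        Finset.mem_inter.2 ⟨hPe ▸ labVerts_mono (hPc e he2) (hct e he2),
          tail_mem_labVerts he2⟩⟩
    have hvfible := Finset.card_le_card hvfib
    rcases hPpiece e₀ he₀ with hT | hB
    · have hb := indep_bound2 h2 hfibsub hfibne
      have hq2 := hT.2
      omega
    · obtain ⟨hBne, ⟨θq, hθq⟩, hq3⟩ := hB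
      have hbalfib : IsBalanced head tail ψ (F₂.filter (fun e => Pf e = Pf e₀)) := by
        refine ⟨θq, ?_⟩
        intro e hee
        obtain ⟨he2, hPe⟩ := Finset.mem_filter.1 hee
        have hcsub : cert e ⊆ Pf e₀ := hPe ▸ hPc e he2
        have hcB : BTight head tail ψ (cert e) ∧
            IsBalanced head tail ψ (insert e (cert e)) := by
          rcases hcp e he2 with h | h
          · exfalso
            have hbalc : IsBalanced head tail ψ (cert e) :=
              balanced_subset hcsub ⟨θq, hθq⟩
            have hi3 := indep_bound3 hFind (hcF e he2) h.1 hbalc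
            have hi2 := h.2
            omega
          · exact h
        exact compat hFind (hcF e he2) hcB.1 (fun f hf => hθq f (hcsub hf))
          hcB.2 (hch e he2) (hct e he2)
      have hb := indep_bound3 h2 hfibsub hfibne hbalfib
      omega
  -- global counting
  have hUsub : (F₂.image Pf).biUnion id ⊆ F := by
    intro x hx
    obtain ⟨q, hq, hxq⟩ := Finset.mem_biUnion.1 hx
    obtain ⟨e, he, rfl⟩ := Finset.mem_image.1 hq
    exact hPsub e he hxq
  have hUcard : ((F₂.image Pf).biUnion id).card = ∑ q ∈ F₂.image Pf, q.card :=
    Finset.card_biUnion hdisj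
  have hfib : F₂.card = ∑ q ∈ F₂.image Pf, (F₂.filter (fun e => Pf e = q)).card :=
    Finset.card_eq_sum_card_fiberwise (fun e he => Finset.mem_image_of_mem Pf he)
  have hsumA : F₂.card + 2 * ∑ q ∈ F₂.image Pf, (labVerts (V := V) head tail q).card
      ≤ 2 * ∑ q ∈ F₂.image Pf, (labVerts head tail q ∩ labVerts head tail F₂).card
        + ((F₂.image Pf).biUnion id).card := by
    rw [hfib, hUcard, Finset.mul_sum, Finset.mul_sum, ← Finset.sum_add_distrib,
      ← Finset.sum_add_distrib]
    exact Finset.sum_le_sum hqb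
  have hsumV : ∑ q ∈ F₂.image Pf, (labVerts (V := V) head tail q).card
      = ∑ q ∈ F₂.image Pf, (labVerts head tail q ∩ labVerts head tail F₂).card
        + ∑ q ∈ F₂.image Pf, (labVerts head tail q \ labVerts head tail F₂).card := by
    rw [← Finset.sum_add_distrib]
    exact Finset.sum_congr rfl
      (fun q _ => (Finset.card_inter_add_card_sdiff _ _).symm)
  have hvU : labVerts head tail ((F₂.image Pf).biUnion id) ⊆
      labVerts head tail F₂ ∪
        (F₂.image Pf).biUnion (fun q => labVerts head tail q \ labVerts head tail F₂) := by
    intro x hx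
    rw [mem_labVerts] at hx
    obtain ⟨f, hf, hx⟩ := hx
    obtain ⟨q, hq, hfq⟩ := Finset.mem_biUnion.1 hf
    have hxq : x ∈ labVerts (V := V) head tail q := by
      rcases hx with rfl | rfl
      · exact head_mem_labVerts hfq
      · exact tail_mem_labVerts hfq
    by_cases hxF : x ∈ labVerts (V := V) head tail F₂
    · exact Finset.mem_union_left _ hxF
    · exact Finset.mem_union_right _
        (Finset.mem_biUnion.2 ⟨q, hq, Finset.mem_sdiff.2 ⟨hxq, hxF⟩⟩)
  have hvUcard : (labVerts (V := V) head tail ((F₂.image Pf).biUnion id)).card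
      ≤ (labVerts head tail F₂).card
        + ∑ q ∈ F₂.image Pf, (labVerts head tail q \ labVerts head tail F₂).card :=
    (Finset.card_le_card hvU).trans ((Finset.card_union_le _ _).trans
      (Nat.add_le_add_left Finset.card_biUnion_le _))
  obtain ⟨e₀, he₀⟩ := ht2.1
  have hUne : ((F₂.image Pf).biUnion id).Nonempty :=
    (piece_nonempty (hPpiece e₀ he₀)).mono
      (Finset.subset_biUnion_of_mem id (Finset.mem_image_of_mem Pf he₀))
  have hUb := indep_bound2 hFind hUsub hUne
  have hF₂t := ht2.2
  have hUtight : ((F₂.image Pf).biUnion id).card + 2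
      = 2 * (labVerts (V := V) head tail ((F₂.image Pf).biUnion id)).card := by
    omega
  have hUpiece : Piece head tail ψ ((F₂.image Pf).biUnion id) :=
    Or.inl ⟨hUne, hUtight⟩
  have hallq : ∀ e ∈ F₂, Pf e = (F₂.image Pf).biUnion id := fun e he =>
    habs e he _ hUsub hUpiece (Finset.subset_biUnion_of_mem id (Finset.mem_image_of_mem Pf he))
  have hvF₂U : labVerts head tail F₂ ⊆
      labVerts (V := V) head tail ((F₂.image Pf).biUnion id) := by
    intro x hx
    rw [mem_labVerts] at hx
    obtain ⟨e, he, hx⟩ := hx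
    have h1' : labVerts head tail (cert e) ⊆
        labVerts (V := V) head tail ((F₂.image Pf).biUnion id) :=
      (hallq e he) ▸ labVerts_mono (hPc e he)
    rcases hx with rfl | rfl
    · exact h1' (hch e he)
    · exact h1' (hct e he)
  -- merge with the piece containing F₁
  obtain ⟨P₁, hP₁sub, hP₁piece, hF₁P₁, hP₁max⟩ := exists_max_piece (ψ := ψ) hF1F (Or.inl ht1)
  have hsh2 : 2 ≤ (labVerts head tail P₁ ∩
      labVerts (V := V) head tail ((F₂.image Pf).biUnion id)).card := by
    refine le_trans hsh (Finset.card_le_card ?_)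
    exact Finset.inter_subset_inter (labVerts_mono hF₁P₁) hvF₂U
  have hpu := piece_union hFind hP₁sub hUsub hP₁piece hUpiece hsh2
  have hub := Finset.union_subset hP₁sub hUsub
  have hequ : Pf e₀ = P₁ ∪ (F₂.image Pf).biUnion id := by
    refine habs e₀ he₀ _ hub hpu ?_
    rw [hallq e₀ he₀]
    exact Finset.subset_union_right
  have hP₁U : P₁ ⊆ (F₂.image Pf).biUnion id := by
    have h := (hallq e₀ he₀).symm.trans hequ
    intro x hx
    rw [h]
    exact Finset.mem_union_left _ hx
  have hvF₁U : labVerts head tail F₁ ⊆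
      labVerts (V := V) head tail ((F₂.image Pf).biUnion id) :=
    (labVerts_mono hF₁P₁).trans (labVerts_mono hP₁U)
  exact ⟨(F₂.image Pf).biUnion id, hUsub.trans hFsub, indep_subset hUsub hFind,
    ⟨hUne, hUtight⟩, Finset.union_subset hvF₁U hvF₂U⟩

end Main


/-- Lemma cl:G_1cupG_2rigid2 (ii). If `G₁` and `G₂` are periodically
rigid and share at least two vertices, then `G₁ ∪ G₂` is periodically rigid:
`r₂(E₁ ∪ E₂) = 2|V₁ ∪ V₂| − 2`. -/
theorem union_periodically_rigid
    {V ε Γ : Type*} [DecidableEq V] [DecidableEq ε] [AddCommGroup Γ]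
    (head tail : ε → V) (ψ : ε → Γ) (E₁ E₂ : Finset ε)
    (hshare : 2 ≤ (labVerts head tail E₁ ∩ labVerts head tail E₂).card)
    (hr1 : rank2 head tail ψ E₁ = 2 * (labVerts head tail E₁).card - 2)
    (hr2 : rank2 head tail ψ E₂ = 2 * (labVerts head tail E₂).card - 2) :
    rank2 head tail ψ (E₁ ∪ E₂) = 2 * (labVerts head tail (E₁ ∪ E₂)).card - 2 := by
  classical
  have hv1 : 2 ≤ (labVerts head tail E₁).card :=
    le_trans hshare (Finset.card_le_card Finset.inter_subset_left)
  have hv2 : 2 ≤ (labVerts head tail E₂).card :=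
    le_trans hshare (Finset.card_le_card Finset.inter_subset_right)
  obtain ⟨F₁, hF₁E, hF₁i, hF₁c⟩ := rank2_attained (head := head) (tail := tail) (ψ := ψ) E₁
  rw [hr1] at hF₁c
  have hc1 : F₁.card + 2 = 2 * (labVerts head tail E₁).card := by omega
  have hF₁ne : F₁.Nonempty := Finset.card_pos.1 (by omega)
  have hb1 := indep_bound2 hF₁i (Finset.Subset.refl F₁) hF₁ne
  have hvF₁ : labVerts head tail F₁ = labVerts head tail E₁ :=
    Finset.eq_of_subset_of_card_le (labVerts_mono hF₁E) (by omega)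
  have ht1 : Tight head tail F₁ := ⟨hF₁ne, by rw [hvF₁]; exact hc1⟩
  obtain ⟨F₂, hF₂E, hF₂i, hF₂c⟩ := rank2_attained (head := head) (tail := tail) (ψ := ψ) E₂
  rw [hr2] at hF₂c
  have hc2 : F₂.card + 2 = 2 * (labVerts head tail E₂).card := by omega
  have hF₂ne : F₂.Nonempty := Finset.card_pos.1 (by omega)
  have hb2 := indep_bound2 hF₂i (Finset.Subset.refl F₂) hF₂ne
  have hvF₂ : labVerts head tail F₂ = labVerts head tail E₂ :=
    Finset.eq_of_subset_of_card_le (labVerts_mono hF₂E) (by omega)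
  have ht2 : Tight head tail F₂ := ⟨hF₂ne, by rw [hvF₂]; exact hc2⟩
  have hshF : 2 ≤ (labVerts head tail F₁ ∩ labVerts head tail F₂).card := by
    rw [hvF₁, hvF₂]; exact hshare
  obtain ⟨U, hUsub, hUind, hUt, hUspan⟩ :=
    exists_spanning_tight hF₁i hF₂i ht1 ht2 hshF
  have hUE : U ⊆ E₁ ∪ E₂ := hUsub.trans (Finset.union_subset_union hF₁E hF₂E)
  have hvEU : labVerts head tail (E₁ ∪ E₂) = labVerts head tail U := by
    apply Finset.Subset.antisymm
    · rw [labVerts_union, ← hvF₁, ← hvF₂]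
      exact hUspan
    · exact labVerts_mono hUE
  apply le_antisymm
  · apply rank2_le
    intro G hG hGi
    rcases Finset.eq_empty_or_nonempty G with rfl | hne
    · simp
    · have hGb := hGi.1 G (Finset.Subset.refl G) hne
      have hmono := Finset.card_le_card
        (labVerts_mono (head := head) (tail := tail) hG)
      omega
  · have hle := le_rank2 hUE hUind
    have hUc := hUt.2
    rw [hvEU]
    omega
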